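/- The polynomial s³ + (-4-δ)s² + (3+2δ)s + δ in the real variable s has all three roots real and positive for all δ in an interval of the form (δ₀, 0) for some δ₀ < 0; in particular this holds for δ = -0.3. -/
import Mathlib


theorem stmt7 :
    ∃ δ₀ : ℝ, δ₀ < 0 ∧ δ₀ < -0.3 ∧
      ∀ δ : ℝ, δ₀ < δ → δ < 0 →
        ∃ a b c : ℝ, 0 < a ∧ 0 < b ∧ 0 < c ∧
          ∀ s : ℝ, s ^ 3 + (-4 - δ) * s ^ 2 + (3 + 2 * δ) * s + δ
            = (s - a) * (s - b) * (s - c) := by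
  refine ⟨-5/14, by norm_num, by norm_num, ?_⟩
  intro δ hδ0 hδ
  set f : ℝ → ℝ := fun s => s ^ 3 + (-4 - δ) * s ^ 2 + (3 + 2 * δ) * s + δ with hf
  have hcont : Continuous f := by fun_prop
  have hf0 : f 0 = δ := by simp [hf]
  have hfh : f (1/2) = 5/8 + 7/4 * δ := by simp only [hf]; ring
  have hf2 : f 2 = -2 + δ := by simp only [hf]; ring
  have hf4 : f 4 = 12 - 7 * δ := by simp only [hf]; ring
  obtain ⟨a, haI, hfa⟩ := intermediate_value_Ioo (by norm_num : (0:ℝ) ≤ 1/2)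
    hcont.continuousOn (by rw [hf0, hfh]; constructor <;> linarith : (0:ℝ) ∈ Set.Ioo (f 0) (f (1/2)))
  obtain ⟨b, hbI, hfb⟩ := intermediate_value_Ioo' (by norm_num : (1/2:ℝ) ≤ 2)
    hcont.continuousOn (by rw [hf2, hfh]; constructor <;> linarith : (0:ℝ) ∈ Set.Ioo (f 2) (f (1/2)))
  obtain ⟨c, hcI, hfc⟩ := intermediate_value_Ioo (by norm_num : (2:ℝ) ≤ 4)
    hcont.continuousOn (by rw [hf2, hf4]; constructor <;> linarith : (0:ℝ) ∈ Set.Ioo (f 2) (f 4))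
  obtain ⟨ha1, ha2⟩ := haI
  obtain ⟨hb1, hb2⟩ := hbI
  obtain ⟨hc1, hc2⟩ := hcI
  simp only [hf] at hfa hfb hfc
  have hab : a - b ≠ 0 := by intro h; nlinarith [sub_eq_zero.mp h]
  have hbc : b - c ≠ 0 := by intro h; nlinarith [sub_eq_zero.mp h]
  have hq1 : a^2 + a*b + b^2 - (4+δ)*(a+b) + (3+2*δ) = 0 := by
    have h : (a - b) * (a^2 + a*b + b^2 - (4+δ)*(a+b) + (3+2*δ)) = 0 := by
      linear_combination hfa - hfb
    rcases mul_eq_zero.mp h with h | h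
    · exact absurd h hab
    · exact h
  have hq2 : b^2 + b*c + c^2 - (4+δ)*(b+c) + (3+2*δ) = 0 := by
    have h : (b - c) * (b^2 + b*c + c^2 - (4+δ)*(b+c) + (3+2*δ)) = 0 := by
      linear_combination hfb - hfc
    rcases mul_eq_zero.mp h with h | h
    · exact absurd h hbc
    · exact h
  have hac : a - c ≠ 0 := by intro h; nlinarith [sub_eq_zero.mp h]
  have e1 : a + b + c = 4 + δ := by
    have h : (a - c) * (a + b + c - (4+δ)) = 0 := by linear_combination hq1 - hq2
    rcases mul_eq_zero.mp h with h | h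
    · exact absurd h hac
    · linarith [sub_eq_zero.mp h]
  have e2 : a*b + b*c + c*a = 3 + 2*δ := by linear_combination (a+b)*e1 - hq1
  have e3 : a*b*c = -δ := by linear_combination hfa - a^2*e1 + a*e2
  exact ⟨a, b, c, ha1, by linarith, by linarith, fun s => by
    linear_combination s^2*e1 - s*e2 + e3⟩
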